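/- arXiv:2310.14144 — 2 statements merged into one kernel-verified Lean document; each statement's English description precedes it below -/
import Mathlib

section
/- Let λ_{0−} be a constant with 0 < λ_{0−} ≤ λ_0, let (A, B, C, D, E) be part of the Riccati solution, and define f_{0−} := −ε_0⁻¹(A_0 + λ_{0−}B_0), g_{0−} := −ε_0⁻¹(B_0 + λ_{0−}C_0), h_{0−} := −ε_0⁻¹(D_0 + λ_{0−}E_0), and η_{0−} := −ε_0⁻¹(1 − λ_{0−}/λ_0). Then g_{0−} + η_{0−} < 0 and r := −f_{0−} − λ_{0−}(g_{0−} + η_{0−}) > 0. If moreover β_t + γ̇_t > 0 for all t ∈ [0, T], then −f_{0−} + h_{0−} > 0. -/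
/-!
Write `M = [[A, B], [B, C]]` and `ℓ = (1, λ)`, so `Mℓ = (A + λB, B + λC)`; at `T` the matrix `M` has
kernel `ℓ`, so `B + λC`, `AC - B²` and `λC - 1` all vanish there. Going backwards from `T`, the
signs `λC ≤ 1`, `AC - B² > 0`, `C > 0`, `B + λC > 0` and, for the last claim,
`A - D + λ(B - E) > 0 > B - E` propagate by a barrier argument: at a last zero `t < T` of one of
these quantities, its derivative, read off from the Riccati system, points the wrong way because
of `2β + γ̇ > 0` (resp. `β + γ̇ > 0`) and the signs already known. The only degenerate zeros, where
the pair `(A + λB, B)` or `(A - D + λ(B - E), B - E)` vanishes, are excluded by Grönwall uniqueness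
for the linear system satisfied by that pair, which is nonzero at `T`. The claims at `t = 0` are
algebraic consequences of these signs.
-/

open Set MeasureTheory Matrix

/-- Market parameters: time horizon `T > 0` and bounded measurable coefficient functions
`β, λ, ε, θ, σ : [0,T] → ℝ` with `β > 0`, `σ ≥ 0`, `λ` and `ε` positive and bounded away
from zero, `λ` differentiable with bounded derivative `lam'`, and the no-arbitrage
condition `2β_t + γ̇_t > 0` where `γ = log λ` (so `γ̇ = λ'/λ`). -/
structure Params where
  T : ℝ
  beta : ℝ → ℝ
  lam : ℝ → ℝ
  lam' : ℝ → ℝ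
  eps : ℝ → ℝ
  theta : ℝ → ℝ
  sigma : ℝ → ℝ
  hT : 0 < T
  hbeta_meas : Measurable beta
  htheta_meas : Measurable theta
  hsigma_meas : Measurable sigma
  heps_meas : Measurable eps
  hbeta_bdd : ∃ M, ∀ t ∈ Icc 0 T, |beta t| ≤ M
  htheta_bdd : ∃ M, ∀ t ∈ Icc 0 T, |theta t| ≤ M
  hsigma_bdd : ∃ M, ∀ t ∈ Icc 0 T, |sigma t| ≤ M
  hbeta_pos : ∀ t ∈ Icc 0 T, 0 < beta t
  hsigma_nonneg : ∀ t ∈ Icc 0 T, 0 ≤ sigma t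
  heps_lb : ∃ c, 0 < c ∧ ∀ t ∈ Icc 0 T, c ≤ eps t
  heps_ub : ∃ M, ∀ t ∈ Icc 0 T, eps t ≤ M
  hlam_lb : ∃ c, 0 < c ∧ ∀ t ∈ Icc 0 T, c ≤ lam t
  hlam_ub : ∃ M, ∀ t ∈ Icc 0 T, lam t ≤ M
  hlam_deriv : ∀ t, HasDerivAt lam (lam' t) t
  hlam'_bdd : ∃ M, ∀ t, |lam' t| ≤ M
  hnoarb : ∀ t ∈ Icc 0 T, 0 < 2 * beta t + lam' t / lam t

/-- `γ̇_t = λ'_t / λ_t`, the derivative of `γ = log λ`. -/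
noncomputable def gammaDot (P : Params) (t : ℝ) : ℝ := P.lam' t / P.lam t

/-- The backward Riccati ODE system on `[0,T]` with its terminal conditions. -/
def IsRiccatiSol (P : Params) (A B C D E F K : ℝ → ℝ) : Prop :=
  (∀ t ∈ Icc (0:ℝ) P.T,
      HasDerivAt A ((P.eps t)⁻¹ * (A t + P.lam t * B t) ^ 2) t) ∧
  A P.T = P.lam P.T ∧
  (∀ t ∈ Icc (0:ℝ) P.T,
      HasDerivAt B ((P.eps t)⁻¹ * (A t + P.lam t * B t) * (B t + P.lam t * C t)
        + P.beta t * B t) t) ∧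
  B P.T = -1 ∧
  (∀ t ∈ Icc (0:ℝ) P.T,
      HasDerivAt C ((P.eps t)⁻¹ * (B t + P.lam t * C t) ^ 2 + 2 * P.beta t * C t
        - (P.lam t)⁻¹ * (2 * P.beta t + gammaDot P t)) t) ∧
  C P.T = (P.lam P.T)⁻¹ ∧
  (∀ t ∈ Icc (0:ℝ) P.T,
      HasDerivAt D ((P.eps t)⁻¹ * (A t + P.lam t * B t) * (D t + P.lam t * E t)
        - P.theta t * (A t - D t)) t) ∧
  D P.T = 0 ∧
  (∀ t ∈ Icc (0:ℝ) P.T,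
      HasDerivAt E ((P.eps t)⁻¹ * (B t + P.lam t * C t) * (D t + P.lam t * E t)
        - P.theta t * (B t - E t) + P.beta t * E t) t) ∧
  E P.T = 0 ∧
  (∀ t ∈ Icc (0:ℝ) P.T,
      HasDerivAt F ((P.eps t)⁻¹ * (D t + P.lam t * E t) ^ 2
        - 2 * P.theta t * (D t - F t)) t) ∧
  F P.T = 0 ∧
  (∀ t ∈ Icc (0:ℝ) P.T,
      HasDerivAt K (-(P.sigma t) ^ 2 * (A t - 2 * D t + F t) / 2) t) ∧
  K P.T = 0

open Filter Topology Asymptotics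

theorem HasDerivAt.nonneg_of_eventually_le_right {f : ℝ → ℝ} {f' t : ℝ} (hf : HasDerivAt f f' t)
    (hle : ∀ᶠ s in 𝓝[>] t, f t ≤ f s) : 0 ≤ f' := by
  have hslope : Tendsto (slope f t) (𝓝[>] t) (𝓝 f') :=
    (hasDerivAt_iff_tendsto_slope.1 hf).mono_left (nhdsWithin_mono t fun _ hs => ne_of_gt hs)
  refine ge_of_tendsto hslope ?_
  filter_upwards [hle, self_mem_nhdsWithin] with s hs hts
  rw [slope_def_field]
  exact div_nonneg (sub_nonneg.2 hs) (sub_nonneg.2 (le_of_lt hts))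

theorem HasDerivAt.eventually_lt_left_of_neg {f : ℝ → ℝ} {f' b : ℝ} (hf : HasDerivAt f f' b)
    (hneg : f' < 0) : ∀ᶠ s in 𝓝[<] b, f b < f s := by
  have hslope : Tendsto (slope f b) (𝓝[<] b) (𝓝 f') :=
    (hasDerivAt_iff_tendsto_slope.1 hf).mono_left (nhdsWithin_mono b fun _ hs => ne_of_lt hs)
  filter_upwards [hslope.eventually_lt_const hneg, self_mem_nhdsWithin] with s hs hsb
  rw [slope_def_field, div_lt_iff_of_neg (sub_neg.2 hsb), zero_mul, sub_pos] at hs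
  exact hs

theorem pos_on_Ico_of_no_last_zero {f : ℝ → ℝ} {a b : ℝ} (hf : ContinuousOn f (Icc a b))
    (hb : ∀ᶠ s in 𝓝[<] b, 0 < f s)
    (hzero : ∀ t ∈ Ico a b, f t = 0 → (∀ s ∈ Ioo t b, 0 < f s) → False) :
    ∀ t ∈ Ico a b, 0 < f t := by
  intro t₀ ht₀
  by_contra! hneg
  obtain ⟨c, hcb, hc⟩ := mem_nhdsLT_iff_exists_Ioo_subset.1 hb
  have ht₀c : t₀ ≤ c := not_lt.1 fun h => (hc ⟨h, ht₀.2⟩ : 0 < f t₀).not_ge hneg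
  have hS : IsCompact (Icc t₀ c ∩ f ⁻¹' Iic 0) :=
    isCompact_Icc.of_isClosed_subset ((hf.mono (Icc_subset_Icc ht₀.1 hcb.le))
      |>.preimage_isClosed_of_isClosed isClosed_Icc isClosed_Iic) inter_subset_left
  obtain ⟨t₁, ⟨ht₁, hft₁⟩, hmax⟩ := hS.exists_isGreatest ⟨t₀, ⟨le_rfl, ht₀c⟩, hneg⟩
  have ht₁b : t₁ < b := ht₁.2.trans_lt hcb
  have hright : ∀ s ∈ Ioo t₁ b, 0 < f s := by
    intro s hs
    by_cases hsc : s ≤ c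
    · by_contra! hfs
      exact (hmax ⟨⟨ht₁.1.trans hs.1.le, hsc⟩, hfs⟩).not_gt hs.1
    · exact hc ⟨not_le.1 hsc, hs.2⟩
  have hcont : ContinuousWithinAt f (Ioi t₁) t₁ :=
    (hf t₁ ⟨ht₀.1.trans ht₁.1, ht₁b.le⟩).mono_of_mem_nhdsWithin
      (mem_of_superset (Ioo_mem_nhdsGT ht₁b) (Ioo_subset_Icc_self.trans
        (Icc_subset_Icc_left (ht₀.1.trans ht₁.1))))
  have hft₁' : 0 ≤ f t₁ := ge_of_tendsto hcont <| by
    filter_upwards [Ioo_mem_nhdsGT ht₁b] with s hs using (hright s hs).le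
  exact hzero t₁ ⟨ht₀.1.trans ht₁.1, ht₁b⟩ (le_antisymm hft₁ hft₁') hright

theorem pos_and_pos_on_Ico_of_no_last_zero {f g : ℝ → ℝ} {a b : ℝ}
    (hf : ContinuousOn f (Icc a b)) (hg : ContinuousOn g (Icc a b))
    (hfb : ∀ᶠ s in 𝓝[<] b, 0 < f s) (hgb : ∀ᶠ s in 𝓝[<] b, 0 < g s)
    (hzero : ∀ t ∈ Ico a b, 0 ≤ f t → 0 ≤ g t → (f t = 0 ∨ g t = 0) →
      (∀ s ∈ Ioo t b, 0 < f s ∧ 0 < g s) → False) :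
    ∀ t ∈ Ico a b, 0 < f t ∧ 0 < g t := by
  have := pos_on_Ico_of_no_last_zero (hf.inf hg) ((hfb.and hgb).mono fun s hs => lt_min hs.1 hs.2)
    fun t ht hmin hright => hzero t ht (hmin ▸ min_le_left _ _) (hmin ▸ min_le_right _ _)
      (by rcases min_choice (f t) (g t) with h | h <;> [left; right] <;> rw [← h, hmin])
      fun s hs => lt_min_iff.1 (hright s hs)
  exact fun t ht => lt_min_iff.1 (this t ht)

theorem nonpos_on_Icc_of_deriv_nonneg_of_pos {f f' : ℝ → ℝ} {a b : ℝ}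
    (hf : ∀ t ∈ Icc a b, HasDerivAt f (f' t) t) (hb : f b ≤ 0)
    (hpos : ∀ t ∈ Ioo a b, 0 < f t → 0 ≤ f' t) : ∀ t ∈ Icc a b, f t ≤ 0 := by
  intro t₀ ht₀
  by_contra! h
  have hcont : ContinuousOn f (Icc a b) :=
    continuousOn_of_forall_continuousAt fun t ht => (hf t ht).continuousAt
  have hS : IsCompact (Icc t₀ b ∩ f ⁻¹' Iic 0) :=
    isCompact_Icc.of_isClosed_subset ((hcont.mono (Icc_subset_Icc_left ht₀.1))
      |>.preimage_isClosed_of_isClosed isClosed_Icc isClosed_Iic) inter_subset_left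
  obtain ⟨t₁, ⟨ht₁, hft₁⟩, hmin⟩ := hS.exists_isLeast ⟨b, ⟨ht₀.2, le_rfl⟩, hb⟩
  have hsub : Icc t₀ t₁ ⊆ Icc a b := Icc_subset_Icc ht₀.1 ht₁.2
  have hmono : MonotoneOn f (Icc t₀ t₁) := by
    refine monotoneOn_of_hasDerivWithinAt_nonneg (convex_Icc _ _) (hcont.mono hsub)
      (fun t ht => (hf t (hsub (interior_subset ht))).hasDerivWithinAt) fun t ht => ?_
    rw [interior_Icc] at ht
    refine hpos t ⟨ht₀.1.trans_lt ht.1, ht.2.trans_le ht₁.2⟩ ?_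
    by_contra! hft
    exact (hmin ⟨⟨ht.1.le, ht.2.le.trans ht₁.2⟩, hft⟩).not_gt ht.2
  exact (h.trans_le (hmono ⟨le_rfl, ht₁.1⟩ ⟨ht₁.1, le_rfl⟩ ht₁.1)).not_ge hft₁

theorem abs_mul_add_mul_le (a b x y : ℝ) : |a * x + b * y| ≤ (|a| + |b|) * max |x| |y| := by
  calc |a * x + b * y| ≤ |a| * |x| + |b| * |y| := by
        rw [← abs_mul, ← abs_mul]; exact abs_add_le _ _
    _ ≤ |a| * max |x| |y| + |b| * max |x| |y| := by gcongr <;> simp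
    _ = (|a| + |b|) * max |x| |y| := by ring

theorem boundedAtFilter_principal_iff {α : Type*} {f : α → ℝ} {s : Set α} :
    BoundedAtFilter (𝓟 s) f ↔ ∃ K, ∀ t ∈ s, |f t| ≤ K := by
  simp [BoundedAtFilter, isBigO_iff, eventually_principal]

theorem ContinuousOn.boundedAtFilter_of_isCompact {α : Type*} [TopologicalSpace α] {f : α → ℝ}
    {s : Set α} (hf : ContinuousOn f s) (hs : IsCompact s) : BoundedAtFilter (𝓟 s) f :=
  boundedAtFilter_principal_iff.2 (hs.exists_bound_of_continuousOn hf)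

theorem eq_zero_of_hasDerivAt_linear_of_eq_zero {x y a b c d : ℝ → ℝ} {t₀ t₁ s : ℝ}
    (hx : ∀ t ∈ Icc t₀ t₁, HasDerivAt x (a t * x t + b t * y t) t)
    (hy : ∀ t ∈ Icc t₀ t₁, HasDerivAt y (c t * x t + d t * y t) t)
    (ha : BoundedAtFilter (𝓟 (Icc t₀ t₁)) a) (hb : BoundedAtFilter (𝓟 (Icc t₀ t₁)) b)
    (hc : BoundedAtFilter (𝓟 (Icc t₀ t₁)) c) (hd : BoundedAtFilter (𝓟 (Icc t₀ t₁)) d)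
    (hs : s ∈ Icc t₀ t₁) (hxs : x s = 0) (hys : y s = 0) :
    ∀ t ∈ Icc s t₁, x t = 0 ∧ y t = 0 := by
  obtain ⟨Ka, hKa⟩ := boundedAtFilter_principal_iff.1 ha
  obtain ⟨Kb, hKb⟩ := boundedAtFilter_principal_iff.1 hb
  obtain ⟨Kc, hKc⟩ := boundedAtFilter_principal_iff.1 hc
  obtain ⟨Kd, hKd⟩ := boundedAtFilter_principal_iff.1 hd
  have hsub : Icc s t₁ ⊆ Icc t₀ t₁ := Icc_subset_Icc_left hs.1
  have hxy : ∀ t ∈ Icc s t₁, HasDerivAt (fun t => (x t, y t))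
      (a t * x t + b t * y t, c t * x t + d t * y t) t :=
    fun t ht => (hx t (hsub ht)).prodMk (hy t (hsub ht))
  have := eq_zero_of_abs_deriv_le_mul_abs_self_of_eq_zero_right (K := Ka + Kb + Kc + Kd)
    (continuousOn_of_forall_continuousAt fun t ht => (hxy t ht).continuousAt)
    (fun t ht => (hxy t (Ico_subset_Icc_self ht)).hasDerivWithinAt) (by simp [hxs, hys])
    fun t ht => ?_
  · simpa [Prod.ext_iff] using this
  have ht' := hsub (Ico_subset_Icc_self ht)
  have hm : 0 ≤ max |x t| |y t| := (abs_nonneg _).trans (le_max_left _ _)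
  simp only [Prod.norm_def, Real.norm_eq_abs]
  refine max_le ((abs_mul_add_mul_le _ _ _ _).trans ?_) ((abs_mul_add_mul_le _ _ _ _).trans ?_) <;>
    refine mul_le_mul_of_nonneg_right ?_ hm <;>
    linarith [hKa t ht', hKb t ht', hKc t ht', hKd t ht', abs_nonneg (a t), abs_nonneg (b t),
      abs_nonneg (c t), abs_nonneg (d t)]

namespace Params

variable (P : Params) {t : ℝ}

theorem T_mem_Icc : P.T ∈ Icc 0 P.T := ⟨P.hT.le, le_rfl⟩

theorem eps_pos (ht : t ∈ Icc 0 P.T) : 0 < P.eps t := by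
  obtain ⟨c, hc, hle⟩ := P.heps_lb
  exact hc.trans_le (hle t ht)

theorem lam_pos (ht : t ∈ Icc 0 P.T) : 0 < P.lam t := by
  obtain ⟨c, hc, hle⟩ := P.hlam_lb
  exact hc.trans_le (hle t ht)

theorem two_beta_add_gammaDot_pos (ht : t ∈ Icc 0 P.T) : 0 < 2 * P.beta t + gammaDot P t :=
  P.hnoarb t ht

theorem continuous_lam : Continuous P.lam :=
  continuous_iff_continuousAt.2 fun t => (P.hlam_deriv t).continuousAt

theorem boundedAtFilter_beta : BoundedAtFilter (𝓟 (Icc 0 P.T)) P.beta :=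
  boundedAtFilter_principal_iff.2 P.hbeta_bdd

theorem boundedAtFilter_theta : BoundedAtFilter (𝓟 (Icc 0 P.T)) P.theta :=
  boundedAtFilter_principal_iff.2 P.htheta_bdd

theorem boundedAtFilter_lam : BoundedAtFilter (𝓟 (Icc 0 P.T)) P.lam := by
  obtain ⟨M, hM⟩ := P.hlam_ub
  exact boundedAtFilter_principal_iff.2
    ⟨M, fun t ht => (abs_of_pos (P.lam_pos ht)).trans_le (hM t ht)⟩

theorem boundedAtFilter_inv_eps : BoundedAtFilter (𝓟 (Icc 0 P.T)) fun t => (P.eps t)⁻¹ := by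
  obtain ⟨c, hc, hle⟩ := P.heps_lb
  refine boundedAtFilter_principal_iff.2 ⟨c⁻¹, fun t ht => ?_⟩
  rw [abs_of_pos (inv_pos.2 (P.eps_pos ht))]
  exact inv_anti₀ hc (hle t ht)

theorem boundedAtFilter_gammaDot : BoundedAtFilter (𝓟 (Icc 0 P.T)) (gammaDot P) := by
  obtain ⟨c, hc, hle⟩ := P.hlam_lb
  obtain ⟨M, hM⟩ := P.hlam'_bdd
  refine boundedAtFilter_principal_iff.2 ⟨M / c, fun t ht => ?_⟩
  rw [gammaDot, abs_div, abs_of_pos (P.lam_pos ht)]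
  exact div_le_div₀ ((abs_nonneg _).trans (hM t)) (hM t) hc (hle t ht)

end Params

namespace IsRiccatiSol

variable {P : Params} {A B C D E F K : ℝ → ℝ}

theorem hasDerivAt_lam_mul_C_sub_one (h : IsRiccatiSol P A B C D E F K) {t : ℝ}
    (ht : t ∈ Icc 0 P.T) :
    HasDerivAt (fun t => P.lam t * C t - 1) ((P.eps t)⁻¹ * P.lam t * (B t + P.lam t * C t) ^ 2
      + (2 * P.beta t + gammaDot P t) * (P.lam t * C t - 1)) t := by
  obtain ⟨-, -, -, -, hC, -⟩ := h
  refine (((P.hlam_deriv t).mul (hC t ht)).sub_const 1).congr_deriv ?_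
  have := (P.lam_pos ht).ne'
  simp only [gammaDot]
  field_simp
  ring

theorem lam_mul_C_le_one (h : IsRiccatiSol P A B C D E F K) :
    ∀ t ∈ Icc 0 P.T, P.lam t * C t ≤ 1 := by
  have hw' := fun (t : ℝ) (ht : t ∈ Icc 0 P.T) => h.hasDerivAt_lam_mul_C_sub_one ht
  obtain ⟨-, -, -, -, -, hCT, -⟩ := h
  have := nonpos_on_Icc_of_deriv_nonneg_of_pos hw'
    (by rw [hCT, mul_inv_cancel₀ (P.lam_pos P.T_mem_Icc).ne', sub_self]) fun t ht hpos => ?_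
  · exact fun t ht => sub_nonpos.1 (this t ht)
  have ht' := Ioo_subset_Icc_self ht
  have := P.eps_pos ht'
  have := P.lam_pos ht'
  have := P.two_beta_add_gammaDot_pos ht'
  positivity

theorem hasDerivAt_det (h : IsRiccatiSol P A B C D E F K) {t : ℝ} (ht : t ∈ Icc 0 P.T) :
    HasDerivAt (fun t => A t * C t - B t ^ 2)
      (((P.eps t)⁻¹ * (A t + 2 * P.lam t * B t + P.lam t ^ 2 * C t) + 2 * P.beta t)
        * (A t * C t - B t ^ 2) - (P.lam t)⁻¹ * (2 * P.beta t + gammaDot P t) * A t) t := by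
  obtain ⟨hA, -, hB, -, hC, -⟩ := h
  refine (((hA t ht).mul (hC t ht)).sub ((hB t ht).pow 2)).congr_deriv ?_
  simp only [Nat.cast_ofNat]
  ring

theorem hasDerivAt_A_add_lam_mul_B (h : IsRiccatiSol P A B C D E F K) {t : ℝ}
    (ht : t ∈ Icc 0 P.T) :
    HasDerivAt (fun t => A t + P.lam t * B t)
      ((P.eps t)⁻¹ * (A t + 2 * P.lam t * B t + P.lam t ^ 2 * C t) * (A t + P.lam t * B t)
        + (P.beta t + gammaDot P t) * P.lam t * B t) t := by
  obtain ⟨hA, -, hB, -⟩ := h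
  refine ((hA t ht).add ((P.hlam_deriv t).mul (hB t ht))).congr_deriv ?_
  have := (P.lam_pos ht).ne'
  simp only [gammaDot]
  field_simp
  ring

theorem hasDerivAt_B_add_lam_mul_C (h : IsRiccatiSol P A B C D E F K) {t : ℝ}
    (ht : t ∈ Icc 0 P.T) :
    HasDerivAt (fun t => B t + P.lam t * C t)
      ((P.eps t)⁻¹ * (A t + 2 * P.lam t * B t + P.lam t ^ 2 * C t) * (B t + P.lam t * C t)
        + P.beta t * B t + (2 * P.beta t + gammaDot P t) * (P.lam t * C t - 1)) t := by
  obtain ⟨-, -, hB, -, hC, -⟩ := h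
  refine ((hB t ht).add ((P.hlam_deriv t).mul (hC t ht))).congr_deriv ?_
  have := (P.lam_pos ht).ne'
  simp only [gammaDot]
  field_simp
  ring

theorem boundedAtFilter_inv_eps_mul_quadForm (h : IsRiccatiSol P A B C D E F K) :
    BoundedAtFilter (𝓟 (Icc 0 P.T))
      fun t => (P.eps t)⁻¹ * (A t + 2 * P.lam t * B t + P.lam t ^ 2 * C t) := by
  refine P.boundedAtFilter_inv_eps.mul (ContinuousOn.boundedAtFilter_of_isCompact
    (continuousOn_of_forall_continuousAt fun t ht => ?_) isCompact_Icc)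
  obtain ⟨hA, -, hB, -, hC, -⟩ := h
  have := (hA t ht).continuousAt; have := (hB t ht).continuousAt; have := (hC t ht).continuousAt
  have := P.continuous_lam.continuousAt (x := t)
  fun_prop

theorem boundedAtFilter_inv_eps_mul_B_add_lam_mul_C (h : IsRiccatiSol P A B C D E F K) :
    BoundedAtFilter (𝓟 (Icc 0 P.T)) fun t => (P.eps t)⁻¹ * (B t + P.lam t * C t) :=
  P.boundedAtFilter_inv_eps.mul (ContinuousOn.boundedAtFilter_of_isCompact
    (continuousOn_of_forall_continuousAt fun _ ht => (h.hasDerivAt_B_add_lam_mul_C ht).continuousAt)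
    isCompact_Icc)

theorem not_A_add_lam_mul_B_eq_zero_and_B_eq_zero (h : IsRiccatiSol P A B C D E F K) {t : ℝ}
    (ht : t ∈ Icc 0 P.T) : ¬(A t + P.lam t * B t = 0 ∧ B t = 0) := by
  rintro ⟨hu, hB0⟩
  have hu' := fun (s : ℝ) (hs : s ∈ Icc 0 P.T) => h.hasDerivAt_A_add_lam_mul_B hs
  have hQ := h.boundedAtFilter_inv_eps_mul_quadForm
  have hV := h.boundedAtFilter_inv_eps_mul_B_add_lam_mul_C
  obtain ⟨-, -, hB, hBT, -⟩ := h
  have := eq_zero_of_hasDerivAt_linear_of_eq_zero hu'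
    (fun s hs => (hB s hs).congr_deriv (by ring : _ =
      (P.eps s)⁻¹ * (B s + P.lam s * C s) * (A s + P.lam s * B s) + P.beta s * B s))
    hQ ((P.boundedAtFilter_beta.add P.boundedAtFilter_gammaDot).mul P.boundedAtFilter_lam)
    hV P.boundedAtFilter_beta ht hu hB0 P.T ⟨ht.2, le_rfl⟩
  norm_num [hBT] at this

theorem det_pos_and_C_pos (h : IsRiccatiSol P A B C D E F K) :
    ∀ t ∈ Ico 0 P.T, 0 < A t * C t - B t ^ 2 ∧ 0 < C t := by
  have hdet' := fun (t : ℝ) (ht : t ∈ Icc 0 P.T) => h.hasDerivAt_det ht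
  have hnz := fun (t : ℝ) (ht : t ∈ Icc 0 P.T) => h.not_A_add_lam_mul_B_eq_zero_and_B_eq_zero ht
  obtain ⟨hA, hAT, hB, hBT, hC, hCT, -⟩ := h
  have hTI := P.T_mem_Icc
  have hlamT := P.lam_pos hTI
  refine pos_and_pos_on_Ico_of_no_last_zero
    (continuousOn_of_forall_continuousAt fun t ht => (hdet' t ht).continuousAt)
    (continuousOn_of_forall_continuousAt fun t ht => (hC t ht).continuousAt) ?_ ?_ ?_
  · have hdetT : A P.T * C P.T - B P.T ^ 2 = 0 := by
      rw [hAT, hBT, hCT, mul_inv_cancel₀ hlamT.ne']; norm_num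
    refine hdetT ▸ (hdet' P.T hTI).eventually_lt_left_of_neg ?_
    rw [hdetT, hAT, mul_zero, zero_sub, neg_neg_iff_pos]
    exact mul_pos (mul_pos (inv_pos.2 hlamT) (P.two_beta_add_gammaDot_pos hTI)) hlamT
  · exact nhdsWithin_le_nhds ((hC P.T hTI).continuousAt.eventually_const_lt (hCT ▸ inv_pos.2 hlamT))
  intro t ht hdet0 hC0 hzero hright
  have htI := Ico_subset_Icc_self ht
  have hκ := mul_pos (inv_pos.2 (P.lam_pos htI)) (P.two_beta_add_gammaDot_pos htI)
  rcases hC0.eq_or_lt with hCt | hCt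
  · have hBt : B t = 0 := by
      rw [← hCt, mul_zero, zero_sub, neg_nonneg] at hdet0
      exact pow_eq_zero_iff two_ne_zero |>.1 (le_antisymm hdet0 (sq_nonneg _))
    have := (hC t htI).nonneg_of_eventually_le_right <| by
      filter_upwards [Ioo_mem_nhdsGT ht.2] with s hs using hCt ▸ (hright s hs).2.le
    rw [hBt, ← hCt] at this
    linarith
  · have hdet : A t * C t - B t ^ 2 = 0 := by
      rcases hzero with h0 | h0 <;> [exact h0; exact absurd h0 hCt.ne']
    have := (hdet' t htI).nonneg_of_eventually_le_right <| by
      filter_upwards [Ioo_mem_nhdsGT ht.2] with s hs using hdet ▸ (hright s hs).1.le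
    rw [hdet, mul_zero, zero_sub, neg_nonneg] at this
    have hAt : A t ≤ 0 := by
      by_contra! hA
      exact (mul_pos hκ hA).not_ge this
    have hBt : B t = 0 := pow_eq_zero_iff two_ne_zero |>.1 <| by
      nlinarith [sq_nonneg (B t), mul_nonpos_of_nonpos_of_nonneg hAt hCt.le]
    have hAt : A t = 0 := by
      rw [hBt] at hdet
      simpa [hCt.ne'] using hdet
    exact hnz t htI ⟨by rw [hAt, hBt]; ring, hBt⟩

theorem B_add_lam_mul_C_pos (h : IsRiccatiSol P A B C D E F K) :
    ∀ t ∈ Ico 0 P.T, 0 < B t + P.lam t * C t := by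
  have hv' := fun (t : ℝ) (ht : t ∈ Icc 0 P.T) => h.hasDerivAt_B_add_lam_mul_C ht
  have hw := h.lam_mul_C_le_one
  have hC := h.det_pos_and_C_pos
  obtain ⟨-, -, -, hBT, -, hCT, -⟩ := h
  have hTI := P.T_mem_Icc
  have hvT : B P.T + P.lam P.T * C P.T = 0 := by
    rw [hBT, hCT, mul_inv_cancel₀ (P.lam_pos hTI).ne']; norm_num
  refine pos_on_Ico_of_no_last_zero
    (continuousOn_of_forall_continuousAt fun t ht => (hv' t ht).continuousAt) ?_ ?_
  · refine hvT ▸ (hv' P.T hTI).eventually_lt_left_of_neg ?_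
    rw [hvT, hBT, hCT, mul_inv_cancel₀ (P.lam_pos hTI).ne']
    linarith [P.hbeta_pos P.T hTI]
  intro t ht hv0 hright
  have htI := Ico_subset_Icc_self ht
  have := (hv' t htI).nonneg_of_eventually_le_right <| by
    filter_upwards [Ioo_mem_nhdsGT ht.2] with s hs using hv0 ▸ (hright s hs).le
  rw [hv0, mul_zero, zero_add, show B t = -(P.lam t * C t) by linarith] at this
  nlinarith [mul_pos (P.hbeta_pos t htI) (mul_pos (P.lam_pos htI) (hC t ht).2),
    mul_nonpos_of_nonneg_of_nonpos (P.two_beta_add_gammaDot_pos htI).le (sub_nonpos.2 (hw t htI))]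

theorem quadForm_pos (h : IsRiccatiSol P A B C D E F K) {t : ℝ} (ht : t ∈ Ico 0 P.T) (x : ℝ) :
    0 < A t + 2 * x * B t + x ^ 2 * C t := by
  obtain ⟨hdet, hC⟩ := h.det_pos_and_C_pos t ht
  nlinarith [sq_nonneg (B t + x * C t)]

theorem B_add_mul_C_add_one_sub_div_lam_pos (h : IsRiccatiSol P A B C D E F K) {t x : ℝ}
    (ht : t ∈ Ico 0 P.T) (hx : x ≤ P.lam t) : 0 < B t + x * C t + (1 - x / P.lam t) := by
  have hlam := P.lam_pos (Ico_subset_Icc_self ht)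
  refine pos_of_mul_pos_right (a := P.lam t) ?_ hlam.le
  have : P.lam t * (B t + x * C t + (1 - x / P.lam t)) =
      P.lam t * (B t + P.lam t * C t) + (P.lam t - x) * (1 - P.lam t * C t) := by
    field_simp; ring
  rw [this]
  exact add_pos_of_pos_of_nonneg (mul_pos hlam (h.B_add_lam_mul_C_pos t ht))
    (mul_nonneg (sub_nonneg.2 hx) (sub_nonneg.2 (h.lam_mul_C_le_one t (Ico_subset_Icc_self ht))))

theorem hasDerivAt_A_sub_D_add_lam_mul_B_sub_E (h : IsRiccatiSol P A B C D E F K) {t : ℝ}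
    (ht : t ∈ Icc 0 P.T) :
    HasDerivAt (fun t => A t - D t + P.lam t * (B t - E t))
      (((P.eps t)⁻¹ * (A t + 2 * P.lam t * B t + P.lam t ^ 2 * C t) + P.theta t)
          * (A t - D t + P.lam t * (B t - E t))
        + (P.beta t + gammaDot P t) * P.lam t * (B t - E t)) t := by
  obtain ⟨hA, -, hB, -, -, -, hD, -, hE, -⟩ := h
  refine (((hA t ht).sub (hD t ht)).add
    ((P.hlam_deriv t).mul ((hB t ht).sub (hE t ht)))).congr_deriv ?_
  have := (P.lam_pos ht).ne'
  simp only [gammaDot, Pi.sub_apply]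
  field_simp
  ring

theorem hasDerivAt_B_sub_E (h : IsRiccatiSol P A B C D E F K) {t : ℝ} (ht : t ∈ Icc 0 P.T) :
    HasDerivAt (fun t => B t - E t)
      ((P.eps t)⁻¹ * (B t + P.lam t * C t) * (A t - D t + P.lam t * (B t - E t))
        + (P.theta t + P.beta t) * (B t - E t)) t := by
  obtain ⟨-, -, hB, -, -, -, -, -, hE, -⟩ := h
  exact ((hB t ht).sub (hE t ht)).congr_deriv (by ring)

theorem not_A_sub_D_add_lam_mul_B_sub_E_eq_zero_and_B_sub_E_eq_zero
    (h : IsRiccatiSol P A B C D E F K) {t : ℝ} (ht : t ∈ Icc 0 P.T) :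
    ¬(A t - D t + P.lam t * (B t - E t) = 0 ∧ B t - E t = 0) := by
  rintro ⟨hn, hp⟩
  have := eq_zero_of_hasDerivAt_linear_of_eq_zero
    (fun s hs => h.hasDerivAt_A_sub_D_add_lam_mul_B_sub_E hs) (fun s hs => h.hasDerivAt_B_sub_E hs)
    (h.boundedAtFilter_inv_eps_mul_quadForm.add P.boundedAtFilter_theta)
    ((P.boundedAtFilter_beta.add P.boundedAtFilter_gammaDot).mul P.boundedAtFilter_lam)
    h.boundedAtFilter_inv_eps_mul_B_add_lam_mul_C
    (P.boundedAtFilter_theta.add P.boundedAtFilter_beta) ht hn hp P.T ⟨ht.2, le_rfl⟩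
  obtain ⟨-, -, -, hBT, -, -, -, -, -, hET, -⟩ := h
  norm_num [hBT, hET] at this

theorem A_sub_D_add_lam_mul_B_sub_E_pos_and_B_sub_E_neg (h : IsRiccatiSol P A B C D E F K)
    (hβγ : ∀ t ∈ Icc 0 P.T, 0 < P.beta t + gammaDot P t) :
    ∀ t ∈ Ico 0 P.T, 0 < A t - D t + P.lam t * (B t - E t) ∧ B t - E t < 0 := by
  have hn' := fun (t : ℝ) (ht : t ∈ Icc 0 P.T) => h.hasDerivAt_A_sub_D_add_lam_mul_B_sub_E ht
  have hp' : ∀ t ∈ Icc 0 P.T, HasDerivAt (fun t => -(B t - E t)) _ t :=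
    fun t ht => (h.hasDerivAt_B_sub_E ht).neg
  have hnz := fun (t : ℝ) (ht : t ∈ Icc 0 P.T) =>
    h.not_A_sub_D_add_lam_mul_B_sub_E_eq_zero_and_B_sub_E_eq_zero ht
  have hv := h.B_add_lam_mul_C_pos
  obtain ⟨-, hAT, -, hBT, -, -, -, hDT, -, hET, -⟩ := h
  have hTI := P.T_mem_Icc
  have hnT : A P.T - D P.T + P.lam P.T * (B P.T - E P.T) = 0 := by
    rw [hAT, hBT, hDT, hET]; ring
  have := pos_and_pos_on_Ico_of_no_last_zero
    (continuousOn_of_forall_continuousAt fun t ht => (hn' t ht).continuousAt)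
    (continuousOn_of_forall_continuousAt fun t ht => (hp' t ht).continuousAt) ?_ ?_ ?_
  · exact fun t ht => ⟨(this t ht).1, neg_pos.1 (this t ht).2⟩
  · refine hnT ▸ (hn' P.T hTI).eventually_lt_left_of_neg ?_
    rw [hnT, mul_zero, zero_add, hBT, hET]
    nlinarith [mul_pos (hβγ P.T hTI) (P.lam_pos hTI)]
  · exact nhdsWithin_le_nhds ((hp' P.T hTI).continuousAt.eventually_const_lt (by simp [hBT, hET]))
  intro t ht hn0 hp0 hzero hright
  have htI := Ico_subset_Icc_self ht
  rcases hn0.eq_or_lt with hn0 | hn0 <;> rcases hp0.eq_or_lt with hp0 | hp0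
  · exact hnz t htI ⟨hn0.symm, by linarith⟩
  · have := (hn' t htI).nonneg_of_eventually_le_right <| by
      filter_upwards [Ioo_mem_nhdsGT ht.2] with s hs using hn0 ▸ (hright s hs).1.le
    rw [← hn0, mul_zero, zero_add] at this
    nlinarith [mul_pos (hβγ t htI) (P.lam_pos htI)]
  · have := (hp' t htI).nonneg_of_eventually_le_right <| by
      filter_upwards [Ioo_mem_nhdsGT ht.2] with s hs using hp0 ▸ (hright s hs).2.le
    have hps : B t - E t = 0 := by linarith
    simp only [hps, mul_zero, add_zero, neg_nonneg] at this hn0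
    exact this.not_gt (mul_pos (mul_pos (inv_pos.2 (P.eps_pos htI)) (hv t ht)) hn0)
  · rcases hzero with h0 | h0 <;> linarith

theorem A_sub_D_add_mul_B_sub_E_pos (h : IsRiccatiSol P A B C D E F K)
    (hβγ : ∀ t ∈ Icc 0 P.T, 0 < P.beta t + gammaDot P t) {t x : ℝ} (ht : t ∈ Ico 0 P.T)
    (hx : x ≤ P.lam t) : 0 < A t - D t + x * (B t - E t) := by
  obtain ⟨hn, hp⟩ := h.A_sub_D_add_lam_mul_B_sub_E_pos_and_B_sub_E_neg hβγ t ht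
  nlinarith [mul_nonneg (sub_nonneg.2 hx) (neg_nonneg.2 hp.le)]

end IsRiccatiSol

/-- With `0 < λ_{0−} ≤ λ_0` and
`f_{0−} = −ε_0⁻¹(A_0 + λ_{0−}B_0)`, `g_{0−} = −ε_0⁻¹(B_0 + λ_{0−}C_0)`,
`h_{0−} = −ε_0⁻¹(D_0 + λ_{0−}E_0)`, `η_{0−} = −ε_0⁻¹(1 − λ_{0−}/λ_0)`:
`g_{0−} + η_{0−} < 0` and `r := −f_{0−} − λ_{0−}(g_{0−} + η_{0−}) > 0`; if moreover
`β_t + γ̇_t > 0` on `[0,T]`, then `−f_{0−} + h_{0−} > 0`. -/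
theorem opening_auction_coefficients (P : Params)
    (A B C D E F K : ℝ → ℝ) (hsol : IsRiccatiSol P A B C D E F K)
    (lam0m : ℝ) (hlam0m_pos : 0 < lam0m) (hlam0m_le : lam0m ≤ P.lam 0)
    (f0m g0m h0m eta0m r : ℝ)
    (hf0m : f0m = -(P.eps 0)⁻¹ * (A 0 + lam0m * B 0))
    (hg0m : g0m = -(P.eps 0)⁻¹ * (B 0 + lam0m * C 0))
    (hh0m : h0m = -(P.eps 0)⁻¹ * (D 0 + lam0m * E 0))
    (heta0m : eta0m = -(P.eps 0)⁻¹ * (1 - lam0m / P.lam 0))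
    (hr : r = -f0m - lam0m * (g0m + eta0m)) :
    g0m + eta0m < 0 ∧ 0 < r ∧
    ((∀ t ∈ Icc (0:ℝ) P.T, 0 < P.beta t + gammaDot P t) → 0 < -f0m + h0m) := by
  have h0 : (0 : ℝ) ∈ Ico 0 P.T := ⟨le_rfl, P.hT⟩
  have hε := inv_pos.2 (P.eps_pos (Ico_subset_Icc_self h0))
  have hgη : g0m + eta0m = -(P.eps 0)⁻¹ * (B 0 + lam0m * C 0 + (1 - lam0m / P.lam 0)) := by
    rw [hg0m, heta0m]; ring
  refine ⟨?_, ?_, fun hβγ => ?_⟩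
  · rw [hgη, neg_mul, neg_neg_iff_pos]
    exact mul_pos hε (hsol.B_add_mul_C_add_one_sub_div_lam_pos h0 hlam0m_le)
  · have hr' : r = (P.eps 0)⁻¹ * ((A 0 + 2 * lam0m * B 0 + lam0m ^ 2 * C 0)
        + lam0m * (1 - lam0m / P.lam 0)) := by
      rw [hr, hgη, hf0m]; ring
    rw [hr']
    refine mul_pos hε (add_pos_of_pos_of_nonneg (hsol.quadForm_pos h0 lam0m) ?_)
    exact mul_nonneg hlam0m_pos.le
      (sub_nonneg.2 ((div_le_one (P.lam_pos (Ico_subset_Icc_self h0))).2 hlam0m_le))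
  · have hfh : -f0m + h0m = (P.eps 0)⁻¹ * (A 0 - D 0 + lam0m * (B 0 - E 0)) := by
      rw [hf0m, hh0m]; ring
    rw [hfh]
    exact mul_pos hε (hsol.A_sub_D_add_mul_B_sub_E_pos hβγ h0 hlam0m_le)
end

section
/- With constants β, λ, ε ∈ (0,∞), ε̃ := εβ/(2λ) and κ := β√(1 + 1/ε̃) > β, the explicit functions satisfy f̃_t < 0, g̃_t < 0 and d_t > 0 for every t ∈ [0, T]. -/
open Set

set_option maxHeartbeats 1000000

/-- With constants `β, λ, ε > 0`, `ε̃ = εβ/(2λ)` and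
`κ = β√(1 + 1/ε̃) > β`, the explicit functions satisfy `f̃_t < 0`, `g̃_t < 0` and
`d_t > 0` for every `t ∈ [0,T]`. -/
theorem explicit_functions_signs
    (T beta lam eps : ℝ) (hT : 0 < T) (hbeta : 0 < beta) (hlam : 0 < lam) (heps : 0 < eps)
    (epsTil kappa : ℝ) (hepsTil : epsTil = eps * beta / (2 * lam))
    (hkappa : kappa = beta * Real.sqrt (1 + epsTil⁻¹))
    (ftil gtil d : ℝ → ℝ)
    (hftil : ∀ t, ftil t = -(beta⁻¹ - (kappa + beta)⁻¹) * Real.exp (-kappa * (T - t))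
        - (beta⁻¹ + (kappa - beta)⁻¹))
    (hgtil : ∀ t, gtil t = lam⁻¹ * ftil t
        - lam⁻¹ * (1 + Real.exp (-kappa * (T - t))) * (T - t)
        + 2 * lam⁻¹ * kappa⁻¹ * (1 - Real.exp (-kappa * (T - t))))
    (hd : ∀ t, d t =
        Real.exp (kappa * (T - t)) *
          ((kappa - beta)⁻¹ * ((kappa - beta)⁻¹ + beta⁻¹ - kappa⁻¹) + beta⁻¹ * kappa⁻¹)
      + Real.exp (-kappa * (T - t)) *
          ((kappa + beta)⁻¹ * (-(kappa + beta)⁻¹ + beta⁻¹ + kappa⁻¹) + beta⁻¹ * kappa⁻¹)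
      + (T - t) * Real.exp (kappa * (T - t)) * (kappa - beta)⁻¹
      + (T - t) * Real.exp (-kappa * (T - t)) * (kappa + beta)⁻¹
      + 4 * epsTil * beta⁻¹ * kappa⁻¹) :
    ∀ t ∈ Icc (0:ℝ) T, ftil t < 0 ∧ gtil t < 0 ∧ 0 < d t := by
  have hepsTil' : 0 < epsTil := by rw [hepsTil]; positivity
  have hsq : (1:ℝ) < Real.sqrt (1 + epsTil⁻¹) := by
    have h := inv_pos.mpr hepsTil'
    nlinarith [Real.sq_sqrt (show (0:ℝ) ≤ 1 + epsTil⁻¹ by linarith),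
      Real.sqrt_nonneg (1 + epsTil⁻¹)]
  have hk : beta < kappa := by rw [hkappa]; nlinarith
  have hk0 : 0 < kappa := lt_trans hbeta hk
  have h1 : 0 < (kappa - beta)⁻¹ := inv_pos.mpr (by linarith)
  have h2 : 0 < (kappa + beta)⁻¹ := inv_pos.mpr (by linarith)
  have hb0 : 0 < beta⁻¹ := inv_pos.mpr hbeta
  have hl0 : 0 < lam⁻¹ := inv_pos.mpr hlam
  have hki : 0 < kappa⁻¹ := inv_pos.mpr hk0
  have h3 : (kappa + beta)⁻¹ < beta⁻¹ := by
    rw [inv_lt_inv₀ (by linarith) hbeta]; linarith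
  have h4 : kappa⁻¹ < beta⁻¹ := by
    rw [inv_lt_inv₀ hk0 hbeta]; exact hk
  have h5 : kappa⁻¹ < (kappa - beta)⁻¹ := by
    rw [inv_lt_inv₀ hk0 (by linarith)]; linarith
  intro t ht
  obtain ⟨ht0, htT⟩ := ht
  have hτ0 : (0:ℝ) ≤ T - t := by linarith
  have he0 : 0 < Real.exp (-kappa * (T - t)) := Real.exp_pos _
  have he1 : Real.exp (-kappa * (T - t)) ≤ 1 := by
    rw [Real.exp_le_one_iff]; nlinarith
  have hE1 : 1 ≤ Real.exp (kappa * (T - t)) := Real.one_le_exp (by positivity)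
  have hf : ftil t < 0 := by
    rw [hftil]
    nlinarith [mul_pos (show 0 < beta⁻¹ - (kappa + beta)⁻¹ by linarith) he0]
  have hfb : ftil t + 2 * kappa⁻¹ < 0 := by
    rw [hftil]
    nlinarith [mul_pos (show 0 < beta⁻¹ - (kappa + beta)⁻¹ by linarith) he0]
  have hg : gtil t < 0 := by
    rw [hgtil]
    nlinarith [mul_neg_of_pos_of_neg hl0 hfb,
      mul_nonneg (mul_nonneg hl0.le (by linarith : (0:ℝ) ≤ 1 + Real.exp (-kappa * (T - t)))) hτ0,
      mul_pos (mul_pos (mul_pos (by norm_num : (0:ℝ) < 2) hl0) hki) he0]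
  have hA : 0 < Real.exp (kappa * (T - t)) *
      ((kappa - beta)⁻¹ * ((kappa - beta)⁻¹ + beta⁻¹ - kappa⁻¹) + beta⁻¹ * kappa⁻¹) := by
    apply mul_pos (Real.exp_pos _)
    nlinarith [mul_pos h1 (show 0 < (kappa - beta)⁻¹ + beta⁻¹ - kappa⁻¹ by linarith),
      mul_pos hb0 hki]
  have hB : 0 < Real.exp (-kappa * (T - t)) *
      ((kappa + beta)⁻¹ * (-(kappa + beta)⁻¹ + beta⁻¹ + kappa⁻¹) + beta⁻¹ * kappa⁻¹) := by
    apply mul_pos he0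
    nlinarith [mul_pos h2 (show 0 < -(kappa + beta)⁻¹ + beta⁻¹ + kappa⁻¹ by linarith),
      mul_pos hb0 hki]
  have hC : 0 ≤ (T - t) * Real.exp (kappa * (T - t)) * (kappa - beta)⁻¹ := by
    apply mul_nonneg (mul_nonneg hτ0 (Real.exp_pos _).le) h1.le
  have hD : 0 ≤ (T - t) * Real.exp (-kappa * (T - t)) * (kappa + beta)⁻¹ := by
    apply mul_nonneg (mul_nonneg hτ0 he0.le) h2.le
  have hE5 : 0 < 4 * epsTil * beta⁻¹ * kappa⁻¹ := by positivity
  refine ⟨hf, hg, ?_⟩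
  rw [hd]
  linarith
end
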